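/- Let (A,B) be a win-lose bimatrix game whose bipartite graph has minimum out-degree at least one, let k ≥ 1, and let ε satisfy 1 − 1/k ≤ ε < 1. Then the game has an ε-well-supported Nash equilibrium in which the supports of both players' strategies have cardinality at most k if and only if the bipartite graph of the game contains an undominated set of k rows, or an undominated set of k columns, or a cycle of length 2s for some s with 1 ≤ s ≤ k. -/

import Mathlib

open Finset

/-- A win-lose bimatrix game: all payoff entries are 0 or 1. -/
def IsWinLose {m n : ℕ} (A B : Matrix (Fin m) (Fin n) ℝ) : Prop :=
  ∀ i j, (A i j = 0 ∨ A i j = 1) ∧ (B i j = 0 ∨ B i j = 1)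

/-- A mixed strategy: nonnegative entries summing to 1. -/
def IsStrategy {d : ℕ} (p : Fin d → ℝ) : Prop :=
  (∀ i, 0 ≤ p i) ∧ ∑ i, p i = 1

/-- The support of a mixed strategy. -/
noncomputable def strategySupport {d : ℕ} (p : Fin d → ℝ) : Finset (Fin d) :=
  Finset.univ.filter fun i => 0 < p i

/-- (p, q) is an ε-well-supported Nash equilibrium of the game (A, B). -/
def IsWSNE {m n : ℕ} (A B : Matrix (Fin m) (Fin n) ℝ) (ε : ℝ)
    (p : Fin m → ℝ) (q : Fin n → ℝ) : Prop :=
  IsStrategy p ∧ IsStrategy q ∧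
  (∀ i, 0 < p i → ∀ i', ∑ j, A i j * q j ≥ ∑ j, A i' j * q j - ε) ∧
  (∀ j, 0 < q j → ∀ j', ∑ i, p i * B i j ≥ ∑ i, p i * B i j' - ε)

/-- The bipartite graph of the game has minimum out-degree at least one. -/
def MinOutDegOne {m n : ℕ} (A B : Matrix (Fin m) (Fin n) ℝ) : Prop :=
  (∀ i, ∃ j, A i j = 1) ∧ (∀ j, ∃ i, B i j = 1)

/-- The bipartite graph of the game contains a (directed) cycle of length `2 * s`:
distinct rows `ri 0, …, ri (s-1)` and distinct columns `cj 0, …, cj (s-1)` with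
arcs `ri t → cj t` and `cj t → ri (t+1 mod s)`. -/
def HasBipartiteCycle {m n : ℕ} (A B : Matrix (Fin m) (Fin n) ℝ) (s : ℕ) : Prop :=
  ∃ (ri : Fin s → Fin m) (cj : Fin s → Fin n),
    Function.Injective ri ∧ Function.Injective cj ∧
    (∀ t : Fin s, A (ri t) (cj t) = 1) ∧
    (∀ t : Fin s, B (ri ⟨(t.1 + 1) % s, Nat.mod_lt _ t.pos⟩) (cj t) = 1)

/-!
If every `k`-set of rows and of columns is dominated, extend the support of `p` to a `k`-set and
let column `j₀` dominate it: the column player then earns `1` at `j₀`, so every column of the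
support of `q`, being an `ε`-best response with `ε < 1`, earns something, i.e. has an arc from
the support of `p`; symmetrically for rows. Following arcs inside the two supports then closes a
cycle of length at most `2k` (if `m < k` or `n < k`, the whole graph does this job).

Conversely, in a game with payoffs in `[0, 1]` a player's condition holds as soon as each
supported strategy earns at least `1 - ε`, or no strategy earns more than `ε`. With `1 - 1/k ≤ ε`,
uniform strategies on a short cycle, or on an undominated `k`-set together with the strategies
its elements point to, meet one of these on each side.
-/

open Function Matrix

theorem val_finRotate {s : ℕ} (t : Fin s) : (finRotate s t : ℕ) = (t + 1) % s := by
  have := t.neZero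
  rw [finRotate_apply, Fin.val_add, Fin.val_one', Nat.add_mod_mod]

theorem exists_isPeriodicPt_iterate {α : Type*} [Finite α] (f : α → α) (x : α) :
    ∃ a n, 0 < n ∧ IsPeriodicPt f n (f^[a] x) := by
  obtain ⟨a, b, hne, heq⟩ := Finite.exists_ne_map_eq_of_infinite (f^[·] x)
  wlog hab : a < b generalizing a b
  · exact this b a hne.symm heq.symm (by omega)
  refine ⟨a, b - a, by omega, ?_⟩
  rw [IsPeriodicPt, IsFixedPt, ← iterate_add_apply, Nat.sub_add_cancel hab.le]
  exact heq.symm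

theorem exists_periodic_orbit_of_mapsTo {α : Type*} [Finite α] {f : α → α} {S : Set α}
    (hS : S.Nonempty) (hf : Set.MapsTo f S S) :
    ∃ c, 0 < c ∧ ∃ x : Fin c → α,
      Injective x ∧ (∀ t, x t ∈ S) ∧ ∀ t, f (x t) = x (finRotate c t) := by
  obtain ⟨x₀, hx₀⟩ := hS
  obtain ⟨a, n, hn, hper⟩ := exists_isPeriodicPt_iterate f x₀
  set y := f^[a] x₀
  refine ⟨minimalPeriod f y, hper.minimalPeriod_pos hn, fun t => f^[t] y,
    fun t u h => Fin.ext (iterate_injOn_Iio_minimalPeriod t.2 u.2 h),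
    fun t => (hf.iterate t) (hf.iterate a hx₀), fun t => ?_⟩
  change f (f^[t] y) = f^[finRotate _ t] y
  rw [val_finRotate, iterate_mod_minimalPeriod_eq, iterate_succ_apply']

theorem exists_bipartiteCycle {m n : ℕ} {A B : Matrix (Fin m) (Fin n) ℝ}
    {S : Finset (Fin m)} {T : Finset (Fin n)} (hS : S.Nonempty)
    (hST : ∀ i ∈ S, ∃ j ∈ T, A i j = 1) (hTS : ∀ j ∈ T, ∃ i ∈ S, B i j = 1) :
    ∃ s, 1 ≤ s ∧ s ≤ S.card ∧ s ≤ T.card ∧ HasBipartiteCycle A B s := by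
  have : Nonempty (Fin m) := ⟨hS.choose⟩
  have : Nonempty (Fin n) := ⟨(hST _ hS.choose_spec).choose⟩
  choose! col hcolT hcolA using hST
  choose! row hrowS hrowB using hTS
  obtain ⟨s, hs, x, hx, hxS, hfx⟩ := exists_periodic_orbit_of_mapsTo (f := row ∘ col)
    (S := S) hS fun i hi => hrowS _ (hcolT i hi)
  have hcolx : Injective (col ∘ x) := fun t u h =>
    (finRotate s).injective (hx (by rw [← hfx, ← hfx]; exact congrArg row h))
  refine ⟨s, hs, ?_, ?_, x, col ∘ x, hx, hcolx, fun t => hcolA _ (hxS t), fun t => ?_⟩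
  · simpa using card_le_card_of_injOn (s := univ) x (fun t _ => hxS t) hx.injOn
  · simpa using card_le_card_of_injOn (s := univ) (col ∘ x) (fun t _ => hcolT _ (hxS t))
      hcolx.injOn
  · have : (⟨(t + 1) % s, Nat.mod_lt _ t.pos⟩ : Fin s) = finRotate s t :=
      Fin.ext (val_finRotate t).symm
    rw [this, ← hfx]
    exact hrowB _ (hcolT _ (hxS t))

def IsZeroOne {α β : Type*} (M : Matrix α β ℝ) : Prop :=
  ∀ i j, M i j = 0 ∨ M i j = 1

theorem IsWinLose.isZeroOne_left {m n : ℕ} {A B : Matrix (Fin m) (Fin n) ℝ}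
    (h : IsWinLose A B) : IsZeroOne A := fun i j => (h i j).1

theorem IsWinLose.isZeroOne_right {m n : ℕ} {A B : Matrix (Fin m) (Fin n) ℝ}
    (h : IsWinLose A B) : IsZeroOne B := fun i j => (h i j).2

theorem IsWinLose.transpose {m n : ℕ} {A B : Matrix (Fin m) (Fin n) ℝ}
    (h : IsWinLose A B) : IsWinLose Bᵀ Aᵀ := fun j i => (h i j).symm

theorem IsZeroOne.transpose {α β : Type*} {M : Matrix α β ℝ} (h : IsZeroOne M) :
    IsZeroOne Mᵀ := fun j i => h i j

theorem mem_strategySupport {d : ℕ} {p : Fin d → ℝ} {i : Fin d} :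
    i ∈ strategySupport p ↔ 0 < p i := by
  simp [strategySupport]

theorem IsStrategy.exists_pos {d : ℕ} {p : Fin d → ℝ} (hp : IsStrategy p) : ∃ i, 0 < p i := by
  obtain ⟨i, -, hi⟩ := exists_lt_of_sum_lt (f := 0) (s := univ) (g := p) (by simp [hp.2])
  exact ⟨i, hi⟩

section Payoff

variable {a b : ℕ} {M : Matrix (Fin a) (Fin b) ℝ} {q : Fin b → ℝ} {i : Fin a} {j : Fin b}

theorem IsZeroOne.mulVec_nonneg (hM : IsZeroOne M) (hq : ∀ j, 0 ≤ q j) (i : Fin a) :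
    0 ≤ (M *ᵥ q) i := by
  rw [mulVec_apply_eq_sum]
  exact sum_nonneg fun j _ => by rcases hM i j with h | h <;> simp [h, hq j]

theorem IsZeroOne.mulVec_le_one (hM : IsZeroOne M) (hq : IsStrategy q) (i : Fin a) :
    (M *ᵥ q) i ≤ 1 := by
  rw [mulVec_apply_eq_sum, ← hq.2]
  exact sum_le_sum fun j _ => by rcases hM i j with h | h <;> simp [h, hq.1 j]

theorem IsZeroOne.le_mulVec (hM : IsZeroOne M) (hq : ∀ j, 0 ≤ q j) (h : M i j = 1) :
    q j ≤ (M *ᵥ q) i := by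
  have := single_le_sum (f := fun j => M i j * q j) (fun j _ => by
    rcases hM i j with h | h <;> simp [h, hq j]) (mem_univ j)
  simpa [h, mulVec_apply_eq_sum] using this

theorem IsZeroOne.mulVec_le_one_sub (hM : IsZeroOne M) (hq : IsStrategy q) (h : M i j ≠ 1) :
    (M *ᵥ q) i ≤ 1 - q j := by
  have h0 : M i j = 0 := (hM i j).resolve_right h
  have hlose : q j ≤ ∑ j', (1 - M i j') * q j' := by
    have := single_le_sum (f := fun j' => (1 - M i j') * q j') (fun j' _ => by
      rcases hM i j' with h | h <;> simp [h, hq.1 j']) (mem_univ j)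
    simpa [h0] using this
  have hsum : ∑ j', (1 - M i j') * q j' = 1 - (M *ᵥ q) i := by
    simp [sub_mul, sum_sub_distrib, hq.2, mulVec, dotProduct]
  linarith

theorem IsZeroOne.exists_pos_of_mulVec_pos (hM : IsZeroOne M) (h : 0 < (M *ᵥ q) i) :
    ∃ j, 0 < q j ∧ M i j = 1 := by
  obtain ⟨j, -, hj⟩ := exists_lt_of_sum_lt (f := 0) (s := univ) (g := fun j => M i j * q j)
    (by simpa [mulVec, dotProduct] using h)
  rcases hM i j with h | h
  · simp [h] at hj
  · exact ⟨j, by simpa [h] using hj, h⟩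

theorem mulVec_eq_one (hq : IsStrategy q) (h : ∀ j, 0 < q j → M i j = 1) : (M *ᵥ q) i = 1 := by
  rw [mulVec_apply_eq_sum, ← hq.2]
  refine sum_congr rfl fun j _ => ?_
  rcases (hq.1 j).lt_or_eq with hj | hj
  · simp [h j hj]
  · simp [← hj]

end Payoff

def IsWellSupportedResponse {a b : ℕ} (M : Matrix (Fin a) (Fin b) ℝ) (ε : ℝ)
    (p : Fin a → ℝ) (q : Fin b → ℝ) : Prop :=
  ∀ i, 0 < p i → ∀ i', (M *ᵥ q) i' - ε ≤ (M *ᵥ q) i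

theorem isWSNE_iff {m n : ℕ} {A B : Matrix (Fin m) (Fin n) ℝ} {ε : ℝ} {p : Fin m → ℝ}
    {q : Fin n → ℝ} :
    IsWSNE A B ε p q ↔ IsStrategy p ∧ IsStrategy q ∧
      IsWellSupportedResponse A ε p q ∧ IsWellSupportedResponse Bᵀ ε q p := by
  simp only [IsWSNE, IsWellSupportedResponse, mulVec_transpose]
  rfl

namespace IsWellSupportedResponse

variable {a b : ℕ} {M : Matrix (Fin a) (Fin b) ℝ} {ε : ℝ} {p : Fin a → ℝ} {q : Fin b → ℝ}

theorem of_forall_wins (hM : IsZeroOne M) (hq : IsStrategy q)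
    (h : ∀ i, 0 < p i → ∃ j, M i j = 1 ∧ 1 - ε ≤ q j) : IsWellSupportedResponse M ε p q := by
  intro i hi i'
  obtain ⟨j, hij, hqj⟩ := h i hi
  linarith [hM.le_mulVec hq.1 hij, hM.mulVec_le_one hq i']

theorem of_forall_loses (hM : IsZeroOne M) (hq : IsStrategy q)
    (h : ∀ i, ∃ j, M i j ≠ 1 ∧ 1 - ε ≤ q j) : IsWellSupportedResponse M ε p q := by
  intro i _ i'
  obtain ⟨j, hij, hqj⟩ := h i'
  linarith [hM.mulVec_le_one_sub hq hij, hM.mulVec_nonneg hq.1 i]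

theorem exists_win (hr : IsWellSupportedResponse M ε p q) (hM : IsZeroOne M) (hε : ε < 1)
    {i₀ : Fin a} (hi₀ : (M *ᵥ q) i₀ = 1) {i : Fin a} (hi : 0 < p i) :
    ∃ j, 0 < q j ∧ M i j = 1 :=
  hM.exists_pos_of_mulVec_pos (by linarith [hr i hi i₀])

end IsWellSupportedResponse

noncomputable def uniformOn {d : ℕ} (S : Finset (Fin d)) : Fin d → ℝ :=
  fun i => if i ∈ S then (S.card : ℝ)⁻¹ else 0

section Uniform

variable {d : ℕ} {S : Finset (Fin d)}

theorem isStrategy_uniformOn (hS : S.Nonempty) : IsStrategy (uniformOn S) := by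
  refine ⟨fun i => by unfold uniformOn; split_ifs <;> positivity, ?_⟩
  simp [uniformOn, hS.card_pos.ne']

theorem mem_of_uniformOn_pos {i : Fin d} (h : 0 < uniformOn S i) : i ∈ S := by
  by_contra hi
  simp [uniformOn, hi] at h

theorem strategySupport_uniformOn : strategySupport (uniformOn S) = S := by
  ext i
  refine ⟨fun h => mem_of_uniformOn_pos (mem_strategySupport.1 h), fun hi => ?_⟩
  simp [mem_strategySupport, uniformOn, hi, card_pos.2 ⟨i, hi⟩]

theorem one_sub_le_uniformOn {k : ℕ} {ε : ℝ} (hSk : S.card ≤ k) (hε : 1 - 1 / (k : ℝ) ≤ ε)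
    {i : Fin d} (hi : i ∈ S) : 1 - ε ≤ uniformOn S i := by
  have hS : (0 : ℝ) < S.card := by exact_mod_cast card_pos.2 ⟨i, hi⟩
  have : 1 / (k : ℝ) ≤ (S.card : ℝ)⁻¹ := by
    rw [one_div]
    exact inv_anti₀ hS (by exact_mod_cast hSk)
  simp only [uniformOn, if_pos hi]
  linarith

end Uniform

def HasSmallSupportWSNE {m n : ℕ} (A B : Matrix (Fin m) (Fin n) ℝ) (ε : ℝ) (k : ℕ) : Prop :=
  ∃ (p : Fin m → ℝ) (q : Fin n → ℝ),
    IsWSNE A B ε p q ∧ (strategySupport p).card ≤ k ∧ (strategySupport q).card ≤ k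

section Game

variable {m n k : ℕ} {ε : ℝ} {A B : Matrix (Fin m) (Fin n) ℝ}

theorem HasSmallSupportWSNE.of_transpose (h : HasSmallSupportWSNE Bᵀ Aᵀ ε k) :
    HasSmallSupportWSNE A B ε k := by
  obtain ⟨q, p, hqp, hq, hp⟩ := h
  obtain ⟨hq', hp', hB, hA⟩ := isWSNE_iff.1 hqp
  rw [transpose_transpose] at hA
  exact ⟨p, q, isWSNE_iff.2 ⟨hp', hq', hA, hB⟩, hp, hq⟩

theorem hasSmallSupportWSNE_uniformOn {S : Finset (Fin m)} {T : Finset (Fin n)}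
    (hS : S.Nonempty) (hT : T.Nonempty) (hSk : S.card ≤ k) (hTk : T.card ≤ k)
    (hA : IsWellSupportedResponse A ε (uniformOn S) (uniformOn T))
    (hB : IsWellSupportedResponse Bᵀ ε (uniformOn T) (uniformOn S)) :
    HasSmallSupportWSNE A B ε k :=
  ⟨uniformOn S, uniformOn T,
    isWSNE_iff.2 ⟨isStrategy_uniformOn hS, isStrategy_uniformOn hT, hA, hB⟩,
    strategySupport_uniformOn ▸ hSk, strategySupport_uniformOn ▸ hTk⟩

theorem hasSmallSupportWSNE_of_undominated_rows (hk : 1 ≤ k) (hε : 1 - 1 / (k : ℝ) ≤ ε)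
    (hWL : IsWinLose A B) (hdeg : ∀ i, ∃ j, A i j = 1) {S : Finset (Fin m)} (hS : S.card = k)
    (hund : ¬ ∃ j, ∀ i ∈ S, B i j = 1) : HasSmallSupportWSNE A B ε k := by
  choose c hc using hdeg
  have hSne : S.Nonempty := card_pos.1 (by omega)
  have hTk : (S.image c).card ≤ k := card_image_le.trans hS.le
  push Not at hund
  refine hasSmallSupportWSNE_uniformOn hSne (hSne.image c) hS.le hTk ?_ ?_
  · refine .of_forall_wins hWL.isZeroOne_left (isStrategy_uniformOn (hSne.image c))
      fun i hi => ⟨c i, hc i, one_sub_le_uniformOn hTk hε ?_⟩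
    exact mem_image_of_mem c (mem_of_uniformOn_pos hi)
  · refine .of_forall_loses hWL.isZeroOne_right.transpose (isStrategy_uniformOn hSne)
      fun j => ?_
    obtain ⟨i, hi, hij⟩ := hund j
    exact ⟨i, hij, one_sub_le_uniformOn hS.le hε hi⟩

theorem hasSmallSupportWSNE_of_bipartiteCycle (hε : 1 - 1 / (k : ℝ) ≤ ε)
    (hWL : IsWinLose A B) {s : ℕ} (hs : 1 ≤ s) (hsk : s ≤ k) (hcyc : HasBipartiteCycle A B s) :
    HasSmallSupportWSNE A B ε k := by
  obtain ⟨ri, cj, hri, hcj, hA, hB⟩ := hcyc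
  have hne : (univ : Finset (Fin s)).Nonempty := ⟨⟨0, hs⟩, mem_univ _⟩
  have hSk : (univ.image ri).card ≤ k := by rw [card_image_of_injective _ hri]; simpa
  have hTk : (univ.image cj).card ≤ k := by rw [card_image_of_injective _ hcj]; simpa
  refine hasSmallSupportWSNE_uniformOn (hne.image ri) (hne.image cj) hSk hTk ?_ ?_
  · refine .of_forall_wins hWL.isZeroOne_left (isStrategy_uniformOn (hne.image cj))
      fun i hi => ?_
    obtain ⟨t, -, rfl⟩ := mem_image.1 (mem_of_uniformOn_pos hi)
    exact ⟨cj t, hA t, one_sub_le_uniformOn hTk hε (mem_image_of_mem cj (mem_univ t))⟩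
  · refine .of_forall_wins hWL.isZeroOne_right.transpose (isStrategy_uniformOn (hne.image ri))
      fun j hj => ?_
    obtain ⟨t, -, rfl⟩ := mem_image.1 (mem_of_uniformOn_pos hj)
    exact ⟨_, hB t, one_sub_le_uniformOn hSk hε (mem_image_of_mem ri (mem_univ _))⟩

theorem exists_bipartiteCycle_of_hasSmallSupportWSNE (hε : ε < 1) (hWL : IsWinLose A B)
    (hdeg : MinOutDegOne A B) (h : HasSmallSupportWSNE A B ε k)
    (hrows : ∀ S : Finset (Fin m), S.card = k → ∃ j, ∀ i ∈ S, B i j = 1)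
    (hcols : ∀ T : Finset (Fin n), T.card = k → ∃ i, ∀ j ∈ T, A i j = 1) :
    ∃ s, 1 ≤ s ∧ s ≤ k ∧ HasBipartiteCycle A B s := by
  obtain ⟨p, q, hpq, hpk, hqk⟩ := h
  obtain ⟨hp, hq, hpA, hqB⟩ := isWSNE_iff.1 hpq
  have hsupp : (strategySupport p).Nonempty :=
    let ⟨i, hi⟩ := hp.exists_pos; ⟨i, mem_strategySupport.2 hi⟩
  by_cases hsmall : m < k ∨ n < k
  · obtain ⟨s, hs, hsm, hsn, hcyc⟩ := exists_bipartiteCycle (hsupp.mono (subset_univ _))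
      (fun i _ => let ⟨j, hj⟩ := hdeg.1 i; ⟨j, mem_univ j, hj⟩)
      (fun j _ => let ⟨i, hi⟩ := hdeg.2 j; ⟨i, mem_univ i, hi⟩)
    simp only [card_univ, Fintype.card_fin] at hsm hsn
    exact ⟨s, hs, by omega, hcyc⟩
  push Not at hsmall
  -- A dominated `k`-set containing a support makes the opponent's best payoff equal to 1.
  obtain ⟨S, hpS, hS⟩ := exists_superset_card_eq hpk (by simpa using hsmall.1)
  obtain ⟨T, hqT, hT⟩ := exists_superset_card_eq hqk (by simpa using hsmall.2)
  obtain ⟨j₀, hj₀⟩ := hrows S hS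
  obtain ⟨i₀, hi₀⟩ := hcols T hT
  have hA₁ : (A *ᵥ q) i₀ = 1 :=
    mulVec_eq_one hq fun j hj => hi₀ j (hqT (mem_strategySupport.2 hj))
  have hB₁ : (Bᵀ *ᵥ p) j₀ = 1 :=
    mulVec_eq_one hp fun i hi => hj₀ i (hpS (mem_strategySupport.2 hi))
  obtain ⟨s, hs, hsS, -, hcyc⟩ := exists_bipartiteCycle hsupp
    (fun i hi => by
      obtain ⟨j, hj, hij⟩ := hpA.exists_win hWL.isZeroOne_left hε hA₁ (mem_strategySupport.1 hi)
      exact ⟨j, mem_strategySupport.2 hj, hij⟩)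
    (fun j hj => by
      obtain ⟨i, hi, hij⟩ :=
        hqB.exists_win hWL.isZeroOne_right.transpose hε hB₁ (mem_strategySupport.1 hj)
      exact ⟨i, mem_strategySupport.2 hi, hij⟩)
  exact ⟨s, hs, hsS.trans hpk, hcyc⟩

end Game

/-- Theorem 1 (characterization of win-lose games with small-support ε-WSNE). -/
theorem WSNE_characterization {m n k : ℕ} (hk : 1 ≤ k) (ε : ℝ)
    (hε0 : 1 - 1 / (k : ℝ) ≤ ε) (hε1 : ε < 1)
    (A B : Matrix (Fin m) (Fin n) ℝ)
    (hWL : IsWinLose A B) (hdeg : MinOutDegOne A B) :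
    (∃ (p : Fin m → ℝ) (q : Fin n → ℝ),
      IsWSNE A B ε p q ∧
      (strategySupport p).card ≤ k ∧ (strategySupport q).card ≤ k) ↔
    ((∃ S : Finset (Fin m), S.card = k ∧ ¬ ∃ j, ∀ i ∈ S, B i j = 1) ∨
     (∃ T : Finset (Fin n), T.card = k ∧ ¬ ∃ i, ∀ j ∈ T, A i j = 1) ∨
     (∃ s, 1 ≤ s ∧ s ≤ k ∧ HasBipartiteCycle A B s)) := by
  constructor
  · intro h
    refine or_iff_not_imp_left.2 fun hrows => or_iff_not_imp_left.2 fun hcols => ?_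
    push Not at hrows hcols
    exact exists_bipartiteCycle_of_hasSmallSupportWSNE hε1 hWL hdeg h hrows hcols
  · rintro (⟨S, hS, hund⟩ | ⟨T, hT, hund⟩ | ⟨s, hs, hsk, hcyc⟩)
    · exact hasSmallSupportWSNE_of_undominated_rows hk hε0 hWL hdeg.1 hS hund
    · exact (hasSmallSupportWSNE_of_undominated_rows hk hε0 hWL.transpose hdeg.2 hT
        hund).of_transpose
    · exact hasSmallSupportWSNE_of_bipartiteCycle hε0 hWL hs hsk hcyc
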